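/- arXiv:2508.15560 — 4 statements merged into one kernel-verified Lean document; each statement's English description precedes it below -/
import Mathlib

section
/- Let x_1, ..., x_N be real numbers with sum S, and let 1 ≤ k ≤ N−1. Then for any subset I ⊂ {1,...,N} with |I| = k, one has Σ_{i∈I} x_i ≥ (k/N)S − √(k(N−k)/N) · √(Σ_{i=1}^N (x_i − S/N)²). -/
/-!
Put `n = card ι`, `k = #s` and `m = (∑ i, x i) / n`. Pairing the centred indicator
`a i = 𝟙[i ∈ s] - k / n` with `x i - m` gives exactly `∑ i ∈ s, x i - (k / n) ∑ i, x i`, and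
`∑ i, a i ^ 2 = k (n - k) / n`, so the estimate is the Cauchy–Schwarz inequality for `a` and `x - m`.
-/

open Finset

namespace Real

variable {ι : Type*}

lemma abs_sum_mul_le_sqrt_mul_sqrt (s : Finset ι) (f g : ι → ℝ) :
    |∑ i ∈ s, f i * g i| ≤ √(∑ i ∈ s, f i ^ 2) * √(∑ i ∈ s, g i ^ 2) := by
  refine abs_le.2 ⟨?_, sum_mul_le_sqrt_mul_sqrt s f g⟩
  simpa [neg_sq, neg_le] using sum_mul_le_sqrt_mul_sqrt s (-f) g

end Real

section CentredIndicator

variable {ι : Type*} [Fintype ι] [DecidableEq ι]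

lemma sum_sq_indicator_sub_density (s : Finset ι) :
    ∑ i, ((if i ∈ s then 1 else 0 : ℝ) - #s / Fintype.card ι) ^ 2 =
      #s * (Fintype.card ι - #s) / Fintype.card ι := by
  rcases (Fintype.card ι).eq_zero_or_pos with hn | hn
  · obtain rfl : s = ∅ := card_eq_zero.1 (Nat.le_zero.1 (hn ▸ card_le_univ s))
    simp
  set c : ℝ := #s / Fintype.card ι with hc
  have h_in : ∀ i ∈ s, ((if i ∈ s then 1 else 0 : ℝ) - c) ^ 2 = (1 - c) ^ 2 :=
    fun i hi => by rw [if_pos hi]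
  have h_out : ∀ i ∈ sᶜ, ((if i ∈ s then 1 else 0 : ℝ) - c) ^ 2 = c ^ 2 :=
    fun i hi => by rw [if_neg (mem_compl.1 hi), zero_sub, neg_sq]
  rw [← sum_add_sum_compl s, sum_congr rfl h_in, sum_congr rfl h_out, sum_const, sum_const,
    card_compl, nsmul_eq_mul, nsmul_eq_mul, Nat.cast_sub (card_le_univ s), hc]
  field_simp
  ring

lemma sum_sub_density_mul_sum_eq (s : Finset ι) (x : ι → ℝ) :
    ∑ i ∈ s, x i - (#s : ℝ) / Fintype.card ι * ∑ i, x i =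
      ∑ i, ((if i ∈ s then 1 else 0 : ℝ) - #s / Fintype.card ι) *
        (x i - (∑ j, x j) / Fintype.card ι) := by
  rcases (Fintype.card ι).eq_zero_or_pos with hn | hn
  · obtain rfl : s = ∅ := card_eq_zero.1 (Nat.le_zero.1 (hn ▸ card_le_univ s))
    simp
  simp only [sub_mul, mul_sub, sum_sub_distrib, ← mul_sum, ite_mul, one_mul,
    zero_mul, sum_ite_mem, univ_inter, sum_const, card_univ, nsmul_eq_mul]
  field_simp
  ring

theorem abs_sum_sub_density_mul_sum_le (s : Finset ι) (x : ι → ℝ) :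
    |∑ i ∈ s, x i - (#s : ℝ) / Fintype.card ι * ∑ i, x i| ≤
      √(#s * (Fintype.card ι - #s) / Fintype.card ι) *
        √(∑ i, (x i - (∑ j, x j) / Fintype.card ι) ^ 2) := by
  rw [sum_sub_density_mul_sum_eq, ← sum_sq_indicator_sub_density]
  exact Real.abs_sum_mul_le_sqrt_mul_sqrt _ _ _

end CentredIndicator

theorem stmt_6_general (N k : ℕ)
    (x : Fin N → ℝ) (S : ℝ) (hS : ∑ i, x i = S)
    (I : Finset (Fin N)) (hI : I.card = k) :
    ((k : ℝ) / N) * S -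
        Real.sqrt ((k : ℝ) * (N - k) / N) *
          Real.sqrt (∑ i, (x i - S / N) ^ 2) ≤ ∑ i ∈ I, x i := by
  subst hS hI
  have h := abs_sum_sub_density_mul_sum_le I x
  rw [Fintype.card_fin] at h
  linarith [neg_abs_le (∑ i ∈ I, x i - (#I : ℝ) / N * ∑ i, x i)]

theorem stmt_6 (N k : ℕ) (hk1 : 1 ≤ k) (hk2 : k ≤ N - 1)
    (x : Fin N → ℝ) (S : ℝ) (hS : ∑ i, x i = S)
    (I : Finset (Fin N)) (hI : I.card = k) :
    ((k : ℝ) / N) * S -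
        Real.sqrt ((k : ℝ) * (N - k) / N) *
          Real.sqrt (∑ i, (x i - S / N) ^ 2) ≤ ∑ i ∈ I, x i :=
  stmt_6_general N k x S hS I hI
end

section
/- Let N ≥ 2, 1 ≤ k ≤ N−1, Λ = (ρ_1,...,ρ_N) ∈ ℝ^N with ρ_1 ≤ ... ≤ ρ_N and T = Σ ρ_i, and β_k = (1/N)(1 − √(k/((N−1)(N−k)))). If the shifted vector Λ_{β_k} := Λ − β_k(T,...,T) satisfies σ_1(Λ_{β_k}) > 0 and σ_2(Λ_{β_k}) > 0, then ρ_1 + ρ_2 + ... + ρ_k > 0. -/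
/-!
Put `a = ρ - β_k T` and `s = √(k / ((N - 1)(N - k)))`, so that `σ₁(a) = s T`. Since `σ₂(a) > 0`,
`|a|² = σ₁(a)² - 2 σ₂(a) < σ₁(a)²`, and Cauchy–Schwarz on the first `k` and on the last `N - k`
coordinates turns this into `(N A - k σ₁(a))² < k (N - 1)(N - k) σ₁(a)²` for `A = a₁ + ⋯ + a_k`.
Hence `N A > (k - √(k (N - 1)(N - k))) σ₁(a)`, and because `√(k (N - 1)(N - k)) · s = k` the
right-hand side is exactly `-k N β_k T`, that is, `N (ρ₁ + ⋯ + ρ_k) = N A + k N β_k T > 0`.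
-/

noncomputable def sigma1 (N : ℕ) (a : Fin N → ℝ) : ℝ := ∑ i, a i

noncomputable def sigma2 (N : ℕ) (a : Fin N → ℝ) : ℝ :=
  ∑ i, ∑ j ∈ Finset.univ.filter (fun j => i < j), a i * a j

noncomputable def beta (N k : ℕ) : ℝ :=
  (1 / N) * (1 - Real.sqrt ((k : ℝ) / (((N : ℝ) - 1) * ((N : ℝ) - k))))

open Finset

theorem sigma1_sq_eq (N : ℕ) (a : Fin N → ℝ) :
    sigma1 N a ^ 2 = ∑ i, a i ^ 2 + 2 * sigma2 N a := by
  have hsplit : ∀ i j, a i * a j = (if i < j then a i * a j else 0) +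
      (if i = j then a i * a j else 0) + (if j < i then a i * a j else 0) := by
    intro i j
    rcases lt_trichotomy i j with h | rfl | h
    · simp [h, h.ne, h.not_gt]
    · simp
    · simp [h, h.ne', h.not_gt]
  have hlower : ∑ i, ∑ j, (if j < i then a i * a j else 0) = sigma2 N a := by
    rw [sum_comm]
    simp only [sigma2, sum_filter, mul_comm]
  rw [sigma1, sq, sum_mul_sum, sum_congr rfl fun i _ => sum_congr rfl fun j _ => hsplit i j]
  simp only [sum_add_distrib, hlower]
  simp [sigma2, sum_filter, sq]
  ring

theorem sum_sq_lt_sigma1_sq {N : ℕ} {a : Fin N → ℝ} (h2 : 0 < sigma2 N a) :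
    ∑ i, a i ^ 2 < sigma1 N a ^ 2 := by
  rw [sigma1_sq_eq]
  linarith

theorem sq_card_mul_sum_sub_add_le {ι : Type*} [Fintype ι] (a : ι → ℝ) (S : Finset ι) :
    ((Fintype.card ι : ℝ) * ∑ i ∈ S, a i - #S * ∑ i, a i) ^ 2
        + #S * (Fintype.card ι - #S) * (∑ i, a i) ^ 2
      ≤ Fintype.card ι * #S * (Fintype.card ι - #S) * ∑ i, a i ^ 2 := by
  classical
  set n : ℝ := (Fintype.card ι : ℝ)
  set m : ℝ := (#S : ℝ)
  have hcompl : (#Sᶜ : ℝ) = n - m := by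
    rw [card_compl, Nat.cast_sub (card_le_univ S)]
  have hS := sq_sum_le_card_mul_sum_sq (s := S) (f := a)
  have hSc := sq_sum_le_card_mul_sum_sq (s := Sᶜ) (f := a)
  rw [hcompl] at hSc
  have hnm : 0 ≤ n - m := by rw [← hcompl]; positivity
  rw [← sum_add_sum_compl S a, ← sum_add_sum_compl S (fun i => a i ^ 2)]
  linear_combination (n * (n - m)) * hS + (n * m) * hSc

theorem neg_sqrt_mul_sigma1_lt_sub {N : ℕ} {a : Fin N → ℝ} (h1 : 0 < sigma1 N a)
    (h2 : 0 < sigma2 N a)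
    {S : Finset (Fin N)} (hS0 : 0 < #S) (hSN : #S < N) :
    -(√(#S * ((N - 1) * (N - #S))) * sigma1 N a) < N * ∑ i ∈ S, a i - #S * sigma1 N a := by
  have hm : (0 : ℝ) < #S := by exact_mod_cast hS0
  have hnm : (0 : ℝ) < N - #S := sub_pos.2 (by exact_mod_cast hSN)
  have hN1 : (0 : ℝ) ≤ N - 1 := sub_nonneg.2 (by exact_mod_cast hS0.trans hSN)
  have hsq : (N * ∑ i ∈ S, a i - #S * sigma1 N a) ^ 2
      < (√(#S * ((N - 1) * (N - #S))) * sigma1 N a) ^ 2 := by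
    have hcs := sq_card_mul_sum_sub_add_le a S
    have hlt := mul_lt_mul_of_pos_left (sum_sq_lt_sigma1_sq h2)
      (mul_pos (mul_pos (by linarith : (0 : ℝ) < N) hm) hnm)
    rw [Fintype.card_fin] at hcs
    rw [mul_pow, Real.sq_sqrt (by positivity)]
    unfold sigma1 at hlt ⊢
    linear_combination hcs + hlt
  exact (abs_lt_of_sq_lt_sq' hsq (by positivity)).1

theorem natCast_mul_beta {N : ℕ} (hN : N ≠ 0) (k : ℕ) :
    N * beta N k = 1 - √(k / ((N - 1) * (N - k))) := by
  rw [beta, ← mul_assoc, mul_one_div_cancel (by exact_mod_cast hN), one_mul]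

theorem sqrt_div_mul_sqrt_mul {x y : ℝ} (hx : 0 ≤ x) (hy : 0 < y) : √(x / y) * √(x * y) = x := by
  rw [← Real.sqrt_mul (by positivity), show x / y * (x * y) = x ^ 2 by field_simp,
    Real.sqrt_sq hx]

theorem stmt_8_general (N k : ℕ) (hk1 : 1 ≤ k) (hk2 : k ≤ N - 1)
    (ρ : Fin N → ℝ)
    (T : ℝ) (hT : T = ∑ i, ρ i)
    (h1 : 0 < sigma1 N (fun i => ρ i - beta N k * T))
    (h2 : 0 < sigma2 N (fun i => ρ i - beta N k * T)) :
    0 < ∑ i ∈ Finset.univ.filter (fun i : Fin N => (i : ℕ) < k), ρ i := by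
  set a : Fin N → ℝ := fun i => ρ i - beta N k * T
  set S := univ.filter (fun i : Fin N => (i : ℕ) < k)
  have hkN : k < N := by omega
  have hS : #S = k := by simp [S, Fin.card_filter_val_lt, hkN.le]
  have hN : (0 : ℝ) < N := by exact_mod_cast (by omega : 0 < N)
  set D : ℝ := (N - 1) * (N - k)
  have hD : 0 < D := by
    have hk1' : (1 : ℝ) ≤ k := by exact_mod_cast hk1
    have hkN' : (k : ℝ) + 1 ≤ N := by exact_mod_cast hkN
    exact mul_pos (by linarith) (by linarith)
  have hNβ := natCast_mul_beta (N := N) (by omega) k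
  have hσ1 : sigma1 N a = √(k / D) * T := by
    simp only [sigma1, a, sum_sub_distrib, sum_const, card_univ, Fintype.card_fin, nsmul_eq_mul,
      ← hT]
    linear_combination -T * hNβ
  have hbound := neg_sqrt_mul_sigma1_lt_sub h1 h2 (S := S) (by omega) (by omega)
  rw [hS] at hbound
  have hρ : N * ∑ i ∈ S, ρ i = N * ∑ i ∈ S, a i - k * sigma1 N a + √(k * D) * sigma1 N a := by
    simp only [a, sum_sub_distrib, sum_const, hS, nsmul_eq_mul]
    rw [hσ1]
    linear_combination k * T * hNβ - T * sqrt_div_mul_sqrt_mul (Nat.cast_nonneg k) hD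
  exact pos_of_mul_pos_right (by rw [hρ]; linarith) hN.le

theorem stmt_8 (N k : ℕ) (hN : 2 ≤ N) (hk1 : 1 ≤ k) (hk2 : k ≤ N - 1)
    (ρ : Fin N → ℝ) (hmono : ∀ i j : Fin N, i ≤ j → ρ i ≤ ρ j)
    (T : ℝ) (hT : T = ∑ i, ρ i)
    (h1 : 0 < sigma1 N (fun i => ρ i - beta N k * T))
    (h2 : 0 < sigma2 N (fun i => ρ i - beta N k * T)) :
    0 < ∑ i ∈ Finset.univ.filter (fun i : Fin N => (i : ℕ) < k), ρ i :=
  stmt_8_general N k hk1 hk2 ρ T hT h1 h2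
end

section
/- Let N ≥ 2, 1 ≤ k ≤ N−1, Λ = (ρ_1,...,ρ_N) ∈ ℝ^N with ρ_1 ≤ ... ≤ ρ_N and T = Σ ρ_i, and β_k = (1/N)(1 − √(k/((N−1)(N−k)))). If the shifted vector Λ_{β_k} := Λ − β_k(T,...,T) satisfies σ_1(Λ_{β_k}) ≥ 0 and σ_2(Λ_{β_k}) ≥ 0, then either ρ_1 + ... + ρ_k > 0, or ρ_1 = ... = ρ_k = 0 and ρ_{k+1} = ... = ρ_N ≥ 0. -/
/-!
Write `a = Λ_β` for `β = β_k`, `S = ∑ aᵢ`, `P = a₁ + ⋯ + a_k`, `n = N` and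
`s = √(k (n - 1) (n - k))`. The identity `(n P - k S)² + n · slack = s² S²`, where the slack is a
nonnegative combination of `S² - ∑ aᵢ² = 2 σ₂(a)` and of the Cauchy–Schwarz defects of the blocks
`{1, …, k}` and `{k + 1, …, n}`, gives `n P ≥ (k - s) S`. The value of `β_k` is exactly the one for
which `s (1 - n β_k) = k`, and then `n (ρ₁ + ⋯ + ρ_k) = n P - (k - s) S ≥ 0`. If `ρ₁ + ⋯ + ρ_k = 0`,
the slack vanishes, so `Λ` is constant on each block; the first block is then zero, and the second
is nonnegative since `k T = s S ≥ 0`.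
-/

open Finset

lemma sum_sum_sub_sq {ι : Type*} (s : Finset ι) (f : ι → ℝ) :
    ∑ i ∈ s, ∑ j ∈ s, (f i - f j) ^ 2 = 2 * (#s * ∑ i ∈ s, f i ^ 2 - (∑ i ∈ s, f i) ^ 2) := by
  simp only [sub_sq, sum_add_distrib, sum_sub_distrib, sum_const, ← mul_sum, ← sum_mul,
    nsmul_eq_mul]
  ring

lemma eq_of_sq_sum_eq_card_mul_sum_sq {ι : Type*} {s : Finset ι} {f : ι → ℝ}
    (h : (∑ i ∈ s, f i) ^ 2 = #s * ∑ i ∈ s, f i ^ 2) {i j : ι} (hi : i ∈ s) (hj : j ∈ s) :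
    f i = f j := by
  have h0 : ∑ i ∈ s, ∑ j ∈ s, (f i - f j) ^ 2 = 0 := by rw [sum_sum_sub_sq, h, sub_self, mul_zero]
  rw [sum_eq_zero_iff_of_nonneg fun _ _ => sum_nonneg fun _ _ => sq_nonneg _] at h0
  have h0i := h0 i hi
  rw [sum_eq_zero_iff_of_nonneg fun _ _ => sq_nonneg _] at h0i
  exact sub_eq_zero.mp (pow_eq_zero_iff two_ne_zero |>.mp (h0i j hj))

lemma eq_zero_of_sum_eq_zero_of_forall_eq {ι : Type*} {s : Finset ι} {f : ι → ℝ} {i : ι}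
    (hi : i ∈ s) (hc : ∀ j ∈ s, f j = f i) (h : ∑ j ∈ s, f j = 0) : f i = 0 := by
  rw [sum_eq_card_nsmul hc, nsmul_eq_mul] at h
  exact (mul_eq_zero.mp h).resolve_left (Nat.cast_ne_zero.mpr (card_ne_zero_of_mem hi))

lemma nonneg_of_sum_nonneg_of_forall_eq {ι : Type*} {s : Finset ι} {f : ι → ℝ} {i : ι}
    (hi : i ∈ s) (hc : ∀ j ∈ s, f j = f i) (h : 0 ≤ ∑ j ∈ s, f j) : 0 ≤ f i := by
  rw [sum_eq_card_nsmul hc, nsmul_eq_mul] at h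
  exact nonneg_of_mul_nonneg_right h (Nat.cast_pos.mpr (card_pos.mpr ⟨i, hi⟩))

section

variable {ι : Type*} [Fintype ι] [DecidableEq ι] (a : ι → ℝ) (t : Finset ι)

lemma sq_card_mul_sum_sub_add_slack :
    (Fintype.card ι * ∑ i ∈ t, a i - #t * ∑ i, a i) ^ 2
      + Fintype.card ι * (#t * #tᶜ * ((∑ i, a i) ^ 2 - ∑ i, a i ^ 2)
        + #tᶜ * (#t * ∑ i ∈ t, a i ^ 2 - (∑ i ∈ t, a i) ^ 2)
        + #t * (#tᶜ * ∑ i ∈ tᶜ, a i ^ 2 - (∑ i ∈ tᶜ, a i) ^ 2))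
      = #t * (Fintype.card ι - 1) * #tᶜ * (∑ i, a i) ^ 2 := by
  rw [← card_add_card_compl t, Nat.cast_add, ← sum_add_sum_compl t a,
    ← sum_add_sum_compl t (a · ^ 2)]
  ring

variable {a t}

lemma sq_card_mul_sum_sub_le (hσ : ∑ i, a i ^ 2 ≤ (∑ i, a i) ^ 2) :
    (Fintype.card ι * ∑ i ∈ t, a i - #t * ∑ i, a i) ^ 2
      ≤ #t * (Fintype.card ι - 1) * #tᶜ * (∑ i, a i) ^ 2 := by
  rw [← sq_card_mul_sum_sub_add_slack]
  have hA := sq_sum_le_card_mul_sum_sq (s := t) (f := a)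
  have hB := sq_sum_le_card_mul_sum_sq (s := tᶜ) (f := a)
  refine le_add_of_nonneg_right
    (mul_nonneg (Nat.cast_nonneg _) (add_nonneg (add_nonneg ?_ ?_) ?_))
  · exact mul_nonneg (by positivity) (by linarith)
  · exact mul_nonneg (by positivity) (by linarith)
  · exact mul_nonneg (by positivity) (by linarith)

lemma card_sub_mul_sum_le_card_mul_sum (hσ : ∑ i, a i ^ 2 ≤ (∑ i, a i) ^ 2)
    (hS : 0 ≤ ∑ i, a i) {s : ℝ} (hs0 : 0 ≤ s) (hs : s ^ 2 = #t * (Fintype.card ι - 1) * #tᶜ) :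
    (#t - s) * ∑ i, a i ≤ Fintype.card ι * ∑ i ∈ t, a i := by
  have hsq := (sq_card_mul_sum_sub_le (t := t) hσ).trans_eq
    (by rw [mul_pow, hs] : _ = (s * ∑ i, a i) ^ 2)
  linarith [(abs_le_of_sq_le_sq' hsq (mul_nonneg hs0 hS)).1]

lemma eq_of_card_mul_sum_eq (hσ : ∑ i, a i ^ 2 ≤ (∑ i, a i) ^ 2) (ht : t.Nonempty)
    (htc : tᶜ.Nonempty) {s : ℝ} (hs : s ^ 2 = #t * (Fintype.card ι - 1) * #tᶜ)
    (h : Fintype.card ι * ∑ i ∈ t, a i = (#t - s) * ∑ i, a i) :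
    (∀ i ∈ t, ∀ j ∈ t, a i = a j) ∧ ∀ i ∈ tᶜ, ∀ j ∈ tᶜ, a i = a j := by
  have hn : (Fintype.card ι : ℝ) ≠ 0 :=
    Nat.cast_ne_zero.mpr ((card_pos.mpr ht).trans_le (card_le_univ t)).ne'
  have hslack := sq_card_mul_sum_sub_add_slack a t
  rw [h, show ((#t - s) * ∑ i, a i - #t * ∑ i, a i) ^ 2 = s ^ 2 * (∑ i, a i) ^ 2 by ring, hs,
    add_eq_left, mul_eq_zero, or_iff_right hn] at hslack
  have hA := sq_sum_le_card_mul_sum_sq (s := t) (f := a)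
  have hB := sq_sum_le_card_mul_sum_sq (s := tᶜ) (f := a)
  have hσ' : 0 ≤ (#t * #tᶜ : ℝ) * ((∑ i, a i) ^ 2 - ∑ i, a i ^ 2) :=
    mul_nonneg (by positivity) (by linarith)
  have hA' : 0 ≤ (#tᶜ : ℝ) * (#t * ∑ i ∈ t, a i ^ 2 - (∑ i ∈ t, a i) ^ 2) :=
    mul_nonneg (by positivity) (by linarith)
  have hB' : 0 ≤ (#t : ℝ) * (#tᶜ * ∑ i ∈ tᶜ, a i ^ 2 - (∑ i ∈ tᶜ, a i) ^ 2) :=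
    mul_nonneg (by positivity) (by linarith)
  have hA_eq := (mul_eq_zero.mp (by linarith : (#tᶜ : ℝ) * (#t * ∑ i ∈ t, a i ^ 2
    - (∑ i ∈ t, a i) ^ 2) = 0)).resolve_left (Nat.cast_ne_zero.mpr htc.card_ne_zero)
  have hB_eq := (mul_eq_zero.mp (by linarith : (#t : ℝ) * (#tᶜ * ∑ i ∈ tᶜ, a i ^ 2
    - (∑ i ∈ tᶜ, a i) ^ 2) = 0)).resolve_left (Nat.cast_ne_zero.mpr ht.card_ne_zero)
  exact ⟨fun i hi j hj => eq_of_sq_sum_eq_card_mul_sum_sq (by linarith) hi hj,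
    fun i hi j hj => eq_of_sq_sum_eq_card_mul_sum_sq (by linarith) hi hj⟩

end

lemma two_mul_sigma2 (N : ℕ) (a : Fin N → ℝ) :
    2 * sigma2 N a = (∑ i, a i) ^ 2 - ∑ i, a i ^ 2 := by
  have hswap : ∑ i, ∑ j ∈ univ.filter (fun j => j < i), a i * a j = sigma2 N a := by
    rw [sigma2, sum_comm' (t' := univ) (s' := fun j => univ.filter (j < ·)) (by simp)]
    simp only [mul_comm]
  have hsplit : ∀ i, ∑ j, a i * a j = ∑ j ∈ univ.filter (i < ·), a i * a j
      + ∑ j ∈ univ.filter (· < i), a i * a j + a i ^ 2 := by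
    intro i
    have : univ.filter (fun j => ¬ i < j) = insert i (univ.filter (· < i)) := by
      ext j; simp [le_iff_lt_or_eq, or_comm]
    rw [← sum_filter_add_sum_filter_not univ (i < ·), this, sum_insert (by simp)]
    ring
  rw [sq, sum_mul_sum, sum_congr rfl fun i _ => hsplit i, sum_add_distrib, sum_add_distrib,
    hswap, sigma2]
  ring

lemma sqrt_mul_one_sub_mul_beta {N k : ℕ} (hk : 0 < k) (hkN : k < N) :
    √(k * ((N - 1) * (N - k))) * (1 - N * beta N k) = k := by
  have hm : (0 : ℝ) < (N - 1) * (N - k) := by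
    have : (k : ℝ) < N := by exact_mod_cast hkN
    have : (1 : ℝ) ≤ k := by exact_mod_cast hk
    apply mul_pos <;> linarith
  have hN : (N : ℝ) ≠ 0 := Nat.cast_ne_zero.mpr (by omega)
  have hcancel : ∀ m : ℝ, m ≠ 0 → (k : ℝ) * m * (k / m) = k * k := fun m hm => by field_simp
  rw [beta, ← mul_assoc (N : ℝ), mul_one_div_cancel hN, one_mul, sub_sub_cancel,
    ← Real.sqrt_mul (by positivity), hcancel _ hm.ne', Real.sqrt_mul_self (Nat.cast_nonneg k)]

section Shift

variable {ι : Type*} [Fintype ι]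

def shift (β : ℝ) (ρ : ι → ℝ) (i : ι) : ℝ := ρ i - β * ∑ j, ρ j

lemma sum_shift (β : ℝ) (ρ : ι → ℝ) :
    ∑ i, shift β ρ i = (1 - Fintype.card ι * β) * ∑ i, ρ i := by
  simp only [shift, sum_sub_distrib, sum_const, card_univ, nsmul_eq_mul]
  ring

variable {β s : ℝ} {ρ : ι → ℝ} {t : Finset ι}

lemma card_mul_sum_eq_of_shift (hβs : s * (1 - Fintype.card ι * β) = #t) :
    Fintype.card ι * ∑ i ∈ t, ρ i
      = Fintype.card ι * ∑ i ∈ t, shift β ρ i - (#t - s) * ∑ i, shift β ρ i := by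
  rw [sum_shift]
  simp only [shift, sum_sub_distrib, sum_const, nsmul_eq_mul]
  linear_combination (-∑ i, ρ i) * hβs

variable [DecidableEq ι]

lemma sum_nonneg_of_shift (ht : t.Nonempty)
    (hσ : ∑ i, shift β ρ i ^ 2 ≤ (∑ i, shift β ρ i) ^ 2) (hS : 0 ≤ ∑ i, shift β ρ i)
    (hs0 : 0 ≤ s) (hs : s ^ 2 = #t * (Fintype.card ι - 1) * #tᶜ)
    (hβs : s * (1 - Fintype.card ι * β) = #t) :
    0 ≤ ∑ i ∈ t, ρ i := by
  have hn : (0 : ℝ) < Fintype.card ι :=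
    Nat.cast_pos.mpr ((card_pos.mpr ht).trans_le (card_le_univ t))
  refine nonneg_of_mul_nonneg_right ?_ hn
  rw [card_mul_sum_eq_of_shift hβs]
  linarith [card_sub_mul_sum_le_card_mul_sum hσ hS hs0 hs]

lemma eq_zero_and_nonneg_of_shift (ht : t.Nonempty) (htc : tᶜ.Nonempty)
    (hσ : ∑ i, shift β ρ i ^ 2 ≤ (∑ i, shift β ρ i) ^ 2) (hS : 0 ≤ ∑ i, shift β ρ i)
    (hs0 : 0 ≤ s) (hs : s ^ 2 = #t * (Fintype.card ι - 1) * #tᶜ)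
    (hβs : s * (1 - Fintype.card ι * β) = #t) (h0 : ∑ i ∈ t, ρ i = 0) :
    (∀ i ∈ t, ρ i = 0) ∧ (∀ i ∈ tᶜ, ∀ j ∈ tᶜ, ρ i = ρ j) ∧ ∀ i ∈ tᶜ, 0 ≤ ρ i := by
  have hF := card_mul_sum_eq_of_shift (ρ := ρ) hβs
  rw [h0, mul_zero, eq_comm, sub_eq_zero] at hF
  obtain ⟨hc, hcc⟩ := eq_of_card_mul_sum_eq hσ ht htc hs hF
  have hT : 0 ≤ ∑ i, ρ i := by
    have : (#t : ℝ) * ∑ i, ρ i = s * ∑ i, shift β ρ i := by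
      rw [sum_shift, ← mul_assoc, hβs]
    exact nonneg_of_mul_nonneg_right (this ▸ mul_nonneg hs0 hS)
      (Nat.cast_pos.mpr (card_pos.mpr ht))
  refine ⟨fun i hi => ?_, fun i hi j hj => sub_left_inj.mp (hcc i hi j hj), fun i hi => ?_⟩
  · exact eq_zero_of_sum_eq_zero_of_forall_eq hi (fun j hj => sub_left_inj.mp (hc j hj i hi)) h0
  · refine nonneg_of_sum_nonneg_of_forall_eq hi (fun j hj => sub_left_inj.mp (hcc j hj i hi)) ?_
    linarith [sum_add_sum_compl t ρ]

end Shift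

theorem stmt_9_general (N k : ℕ) (hk1 : 1 ≤ k) (hk2 : k ≤ N - 1)
    (ρ : Fin N → ℝ)
    (T : ℝ) (hT : T = ∑ i, ρ i)
    (h1 : 0 ≤ sigma1 N (fun i => ρ i - beta N k * T))
    (h2 : 0 ≤ sigma2 N (fun i => ρ i - beta N k * T)) :
    (0 < ∑ i ∈ Finset.univ.filter (fun i : Fin N => (i : ℕ) < k), ρ i) ∨
      ((∀ i : Fin N, (i : ℕ) < k → ρ i = 0) ∧
        (∀ i j : Fin N, k ≤ (i : ℕ) → k ≤ (j : ℕ) → ρ i = ρ j) ∧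
        (∀ i : Fin N, k ≤ (i : ℕ) → 0 ≤ ρ i)) := by
  subst hT
  change 0 ≤ sigma1 N (shift (beta N k) ρ) at h1
  change 0 ≤ sigma2 N (shift (beta N k) ρ) at h2
  have hkN : k < N := by omega
  set t : Finset (Fin N) := univ.filter (fun i : Fin N => (i : ℕ) < k)
  have hmem : ∀ i : Fin N, i ∈ t ↔ (i : ℕ) < k := by simp [t]
  have hmemc : ∀ i : Fin N, i ∈ tᶜ ↔ k ≤ (i : ℕ) := by simp [t]
  have ht : t.Nonempty := ⟨⟨0, by omega⟩, (hmem _).mpr hk1⟩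
  have htc : tᶜ.Nonempty := ⟨⟨N - 1, by omega⟩, (hmemc _).mpr (by simp; omega)⟩
  have hcard : #t = k := by rw [Fin.card_filter_val_lt]; omega
  have hs : √(k * ((N - 1) * (N - k))) ^ 2 = #t * (Fintype.card (Fin N) - 1) * #tᶜ := by
    have : (k : ℝ) + 1 ≤ N := by exact_mod_cast hkN
    rw [Real.sq_sqrt (mul_nonneg (by positivity) (mul_nonneg (by linarith) (by linarith))),
      card_compl, hcard, Fintype.card_fin, Nat.cast_sub hkN.le]
    ring
  have hβs : √(k * ((N - 1) * (N - k))) * (1 - Fintype.card (Fin N) * beta N k) = #t := by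
    rw [Fintype.card_fin, hcard]
    exact sqrt_mul_one_sub_mul_beta hk1 hkN
  have hσ : ∑ i, shift (beta N k) ρ i ^ 2 ≤ (∑ i, shift (beta N k) ρ i) ^ 2 := by
    linarith [two_mul_sigma2 N (shift (beta N k) ρ)]
  rcases (sum_nonneg_of_shift ht hσ h1 (Real.sqrt_nonneg _) hs hβs).lt_or_eq with hpos | hzero
  · exact Or.inl hpos
  obtain ⟨hzero, hconst, hnonneg⟩ :=
    eq_zero_and_nonneg_of_shift ht htc hσ h1 (Real.sqrt_nonneg _) hs hβs hzero.symm
  exact Or.inr ⟨fun i hi => hzero i ((hmem i).mpr hi),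
    fun i j hi hj => hconst i ((hmemc i).mpr hi) j ((hmemc j).mpr hj),
    fun i hi => hnonneg i ((hmemc i).mpr hi)⟩

theorem stmt_9 (N k : ℕ) (hN : 2 ≤ N) (hk1 : 1 ≤ k) (hk2 : k ≤ N - 1)
    (ρ : Fin N → ℝ) (hmono : ∀ i j : Fin N, i ≤ j → ρ i ≤ ρ j)
    (T : ℝ) (hT : T = ∑ i, ρ i)
    (h1 : 0 ≤ sigma1 N (fun i => ρ i - beta N k * T))
    (h2 : 0 ≤ sigma2 N (fun i => ρ i - beta N k * T)) :
    (0 < ∑ i ∈ Finset.univ.filter (fun i : Fin N => (i : ℕ) < k), ρ i) ∨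
      ((∀ i : Fin N, (i : ℕ) < k → ρ i = 0) ∧
        (∀ i j : Fin N, k ≤ (i : ℕ) → k ≤ (j : ℕ) → ρ i = ρ j) ∧
        (∀ i : Fin N, k ≤ (i : ℕ) → 0 ≤ ρ i)) :=
  stmt_9_general N k hk1 hk2 ρ T hT h1 h2
end

section
/- Let x_1 ≤ x_2 ≤ ... ≤ x_N be reals with Σ x_i = S ≥ 0, and suppose x_1 + ... + x_k ≤ 0 for some 1 ≤ k ≤ N−1. Then Σ_{i=1}^N (x_i − S/N)² ≥ S²·k/(N(N−k)). -/
theorem aux_key_16 (S kk nn A : ℝ) (hk : 1 ≤ kk) (hnk : 1 ≤ nn - kk)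
    (hA2' : kk ^ 2 * S ^ 2 ≤ A ^ 2 * nn ^ 2) :
    S ^ 2 * kk / (nn * (nn - kk)) ≤ A ^ 2 / kk + A ^ 2 / (nn - kk) := by
  have hkpos : (0:ℝ) < kk := by linarith
  have hnkpos : (0:ℝ) < nn - kk := by linarith
  have hnpos : (0:ℝ) < nn := by linarith
  have h1 : A ^ 2 / kk + A ^ 2 / (nn - kk) = A ^ 2 * nn / (kk * (nn - kk)) := by
    field_simp; ring
  rw [h1, div_le_div_iff₀ (mul_pos hnpos hnkpos) (mul_pos hkpos hnkpos)]
  nlinarith [mul_le_mul_of_nonneg_right hA2' hnkpos.le, sq_nonneg A, sq_nonneg S]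

theorem stmt_16 (N k : ℕ) (hk1 : 1 ≤ k) (hk2 : k ≤ N - 1)
    (x : Fin N → ℝ) (hmono : ∀ i j : Fin N, i ≤ j → x i ≤ x j)
    (S : ℝ) (hS : ∑ i, x i = S) (hS0 : 0 ≤ S)
    (hk : ∑ i ∈ Finset.univ.filter (fun i : Fin N => (i : ℕ) < k), x i ≤ 0) :
    S ^ 2 * k / (N * ((N : ℝ) - k)) ≤ ∑ i, (x i - S / N) ^ 2 := by
  have hkN : k < N := by omega
  have hFeq : Finset.univ.filter (fun i : Fin N => (i : ℕ) < k)
      = Finset.Iio (⟨k, hkN⟩ : Fin N) := by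
    ext i; simp [Fin.lt_def]
  set F := Finset.Iio (⟨k, hkN⟩ : Fin N) with hFdef
  rw [hFeq] at hk
  have hcF : F.card = k := by simp [hFdef]
  have hcG : Fᶜ.card = N - k := by
    rw [Finset.card_compl, hcF, Fintype.card_fin]
  have hkr : (1:ℝ) ≤ k := by exact_mod_cast hk1
  have hNkr : (1:ℝ) ≤ (N:ℝ) - k := by
    have : (k:ℝ) + 1 ≤ N := by exact_mod_cast hkN
    linarith
  have hNr : (0:ℝ) < N := by linarith
  set y : Fin N → ℝ := fun i => x i - S / N with hy
  -- sums over F and complement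
  set A := ∑ i ∈ F, y i with hA
  set B := ∑ i ∈ Fᶜ, y i with hB
  have hsum : A + B = 0 := by
    rw [hA, hB, Finset.sum_add_sum_compl]
    simp only [hy, Finset.sum_sub_distrib, hS, Finset.sum_const, Finset.card_univ,
      Fintype.card_fin, nsmul_eq_mul]
    field_simp
    ring
  have hAle : A ≤ -(k * S / N) := by
    have : A = (∑ i ∈ F, x i) - k * (S / N) := by
      rw [hA]; simp only [hy]
      rw [Finset.sum_sub_distrib, Finset.sum_const, hcF, nsmul_eq_mul]
    rw [this]
    have : (k:ℝ) * (S / N) = k * S / N := by ring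
    linarith [hk]
  have hCS1 : A ^ 2 ≤ (k:ℝ) * ∑ i ∈ F, y i ^ 2 := by
    have := sq_sum_le_card_mul_sum_sq (s := F) (f := y)
    rw [hcF] at this
    exact_mod_cast this
  have hCS2 : B ^ 2 ≤ ((N:ℝ) - k) * ∑ i ∈ Fᶜ, y i ^ 2 := by
    have := sq_sum_le_card_mul_sum_sq (s := Fᶜ) (f := y)
    rw [hcG] at this
    have hcast : ((N - k : ℕ) : ℝ) = (N:ℝ) - k := by
      have : k ≤ N := le_of_lt hkN
      push_cast [Nat.cast_sub this]; ring
    rw [hcast] at this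
    exact_mod_cast this
  have hsplit : ∑ i, y i ^ 2 = (∑ i ∈ F, y i ^ 2) + ∑ i ∈ Fᶜ, y i ^ 2 :=
    (Finset.sum_add_sum_compl F _).symm
  clear_value A B
  have hBA : B = -A := by linarith
  have hA2 : (k * S / N) ^ 2 ≤ A ^ 2 := by
    have h0 : 0 ≤ k * S / N := by positivity
    nlinarith
  have hkpos : (0:ℝ) < k := by linarith
  have hNkpos : (0:ℝ) < (N:ℝ) - k := by linarith
  have hP : (∑ i ∈ F, y i ^ 2) ≥ A ^ 2 / k := by
    rw [ge_iff_le, div_le_iff₀ hkpos]; linarith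
  have hQ : (∑ i ∈ Fᶜ, y i ^ 2) ≥ A ^ 2 / ((N:ℝ) - k) := by
    rw [hBA, neg_sq] at hCS2
    rw [ge_iff_le, div_le_iff₀ hNkpos]; linarith
  have hkS : (0:ℝ) ≤ k * S := by positivity
  have hAN : k * S ≤ -A * N := by
    have h : (k:ℝ) * S / N ≤ -A := by linarith
    calc (k:ℝ) * S = k * S / N * N := by field_simp
      _ ≤ -A * N := mul_le_mul_of_nonneg_right h hNr.le
  have hA2' : (k:ℝ)^2 * S^2 ≤ A^2 * N^2 := by nlinarith [mul_self_le_mul_self hkS hAN]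
  have key : S ^ 2 * k / (N * ((N:ℝ) - k)) ≤ A ^ 2 / k + A ^ 2 / ((N:ℝ) - k) :=
    aux_key_16 S k N A hkr hNkr hA2'
  calc S ^ 2 * k / (N * ((N:ℝ) - k)) ≤ A ^ 2 / k + A ^ 2 / ((N:ℝ) - k) := key
    _ ≤ (∑ i ∈ F, y i ^ 2) + ∑ i ∈ Fᶜ, y i ^ 2 := by linarith
    _ = ∑ i, y i ^ 2 := hsplit.symm
end
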